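/- Confluence property: any two LD-equivalent terms admit a common LD-expansion; that is, for all terms T, T' in FreeMagma X, if T ≡LD T' then there exists a term T'' with T →LD T'' and T' →LD T''. -/
import Mathlib


/-- LD-equivalence: the smallest congruence on `FreeMagma X` (equivalence relation
compatible with the operation on both sides) containing all pairs
`(T₁ ◃ (T₂ ◃ T₃), (T₁ ◃ T₂) ◃ (T₁ ◃ T₃))`. -/
inductive LDEquiv {X : Type*} : FreeMagma X → FreeMagma X → Prop
  | ld (a b c : FreeMagma X) : LDEquiv (a * (b * c)) ((a * b) * (a * c))
  | refl (a : FreeMagma X) : LDEquiv a a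
  | symm {a b : FreeMagma X} : LDEquiv a b → LDEquiv b a
  | trans {a b c : FreeMagma X} : LDEquiv a b → LDEquiv b c → LDEquiv a c
  | mul_left {a b : FreeMagma X} (c : FreeMagma X) : LDEquiv a b → LDEquiv (c * a) (c * b)
  | mul_right {a b : FreeMagma X} (c : FreeMagma X) : LDEquiv a b → LDEquiv (a * c) (b * c)

/-- LD-expansion: the smallest reflexive and transitive relation on `FreeMagma X`
compatible with the operation on both sides and containing all pairs
`(T₁ ◃ (T₂ ◃ T₃), (T₁ ◃ T₂) ◃ (T₁ ◃ T₃))`. -/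
inductive LDExp {X : Type*} : FreeMagma X → FreeMagma X → Prop
  | ld (a b c : FreeMagma X) : LDExp (a * (b * c)) ((a * b) * (a * c))
  | refl (a : FreeMagma X) : LDExp a a
  | trans {a b c : FreeMagma X} : LDExp a b → LDExp b c → LDExp a c
  | mul_left {a b : FreeMagma X} (c : FreeMagma X) : LDExp a b → LDExp (c * a) (c * b)
  | mul_right {a b : FreeMagma X} (c : FreeMagma X) : LDExp a b → LDExp (a * c) (b * c)

namespace LDAux

variable {X : Type*}

/-- `dot s t`: distribute `s` over the whole of `t`. -/
def dot : FreeMagma X → FreeMagma X → FreeMagma X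
  | s, .of x => s * .of x
  | s, .mul t₁ t₂ => (dot s t₁) * (dot s t₂)

/-- Dehornoy's full expansion operator ∂. -/
def del : FreeMagma X → FreeMagma X
  | .of x => .of x
  | .mul t₁ t₂ => dot (del t₁) (del t₂)

theorem mul_mul {a a' b b' : FreeMagma X} (ha : LDExp a a') (hb : LDExp b b') :
    LDExp (a * b) (a' * b') :=
  (LDExp.mul_right b ha).trans (LDExp.mul_left a' hb)

theorem exp_dot (s t : FreeMagma X) : LDExp (s * t) (dot s t) := by
  induction t with
  | ih1 x => exact LDExp.refl _
  | ih2 t₁ t₂ ih₁ ih₂ =>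
      exact (LDExp.ld s t₁ t₂).trans (mul_mul ih₁ ih₂)

theorem exp_del (t : FreeMagma X) : LDExp t (del t) := by
  induction t with
  | ih1 x => exact LDExp.refl _
  | ih2 t₁ t₂ ih₁ ih₂ =>
      exact (mul_mul ih₁ ih₂).trans (exp_dot _ _)

theorem dot_mono_left {s s' : FreeMagma X} (h : LDExp s s') (t : FreeMagma X) :
    LDExp (dot s t) (dot s' t) := by
  induction t with
  | ih1 x => exact LDExp.mul_right _ h
  | ih2 t₁ t₂ ih₁ ih₂ => exact mul_mul ih₁ ih₂

theorem dot_mono_right (s : FreeMagma X) {t t' : FreeMagma X} (h : LDExp t t') :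
    LDExp (dot s t) (dot s t') := by
  induction h with
  | ld a b c => exact LDExp.ld _ _ _
  | refl a => exact LDExp.refl _
  | trans h₁ h₂ ih₁ ih₂ => exact ih₁.trans ih₂
  | mul_left c h ih => exact LDExp.mul_left _ ih
  | mul_right c h ih => exact LDExp.mul_right _ ih

theorem dot_mono {s s' t t' : FreeMagma X} (hs : LDExp s s') (ht : LDExp t t') :
    LDExp (dot s t) (dot s' t') :=
  (dot_mono_left hs t).trans (dot_mono_right s' ht)

/-- Key lemma: `s∙(t∙u) → (s∙t)∙(s∙u)`. -/
theorem dot_dot (s t u : FreeMagma X) :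
    LDExp (dot s (dot t u)) (dot (dot s t) (dot s u)) := by
  induction u with
  | ih1 x =>
      exact (LDExp.ld (dot s t) s (.of x)).trans
        (LDExp.mul_right _ (exp_dot (dot s t) s))
  | ih2 u₁ u₂ ih₁ ih₂ => exact mul_mul ih₁ ih₂

/-- `(s∙t)·(s∙u) → s∙(t∙u)`. -/
theorem mul_dot (s t u : FreeMagma X) :
    LDExp ((dot s t) * (dot s u)) (dot s (dot t u)) := by
  induction u with
  | ih1 x => exact LDExp.refl _
  | ih2 u₁ u₂ ih₁ ih₂ =>
      exact (LDExp.ld (dot s t) (dot s u₁) (dot s u₂)).trans (mul_mul ih₁ ih₂)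

theorem del_mono {t t' : FreeMagma X} (h : LDExp t t') : LDExp (del t) (del t') := by
  induction h with
  | ld a b c => exact dot_dot (del a) (del b) (del c)
  | refl a => exact LDExp.refl _
  | trans h₁ h₂ ih₁ ih₂ => exact ih₁.trans ih₂
  | mul_left c h ih => exact dot_mono (LDExp.refl _) ih
  | mul_right c h ih => exact dot_mono ih (LDExp.refl _)

theorem exp_deln (n : ℕ) (t : FreeMagma X) : LDExp t (del^[n] t) := by
  induction n with
  | zero => exact LDExp.refl _
  | succ n ih =>
      rw [Function.iterate_succ_apply']
      exact ih.trans (exp_del _)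

theorem deln_mono (n : ℕ) {t t' : FreeMagma X} (h : LDExp t t') :
    LDExp (del^[n] t) (del^[n] t') := by
  induction n with
  | zero => exact h
  | succ n ih =>
      rw [Function.iterate_succ_apply', Function.iterate_succ_apply']
      exact del_mono ih

theorem deln_le {n m : ℕ} (h : n ≤ m) (t : FreeMagma X) :
    LDExp (del^[n] t) (del^[m] t) := by
  obtain ⟨k, rfl⟩ := Nat.exists_eq_add_of_le h
  rw [Nat.add_comm, Function.iterate_add_apply]
  exact exp_deln k _

theorem deln_mul (n : ℕ) (s t : FreeMagma X) :
    LDExp ((del^[n] s) * (del^[n] t)) (del^[n] (s * t)) := by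
  induction n with
  | zero => exact LDExp.refl _
  | succ n ih =>
      rw [Function.iterate_succ_apply', Function.iterate_succ_apply',
        Function.iterate_succ_apply']
      exact (exp_dot _ _).trans (del_mono ih)

/-- Any expansion of `t` expands further to some `∂ⁿ t`. -/
theorem absorb {t t' : FreeMagma X} (h : LDExp t t') :
    ∃ n : ℕ, LDExp t' (del^[n] t) := by
  induction h with
  | ld a b c =>
      refine ⟨1, ?_⟩
      have h₁ : LDExp (a * b) (dot (del a) (del b)) :=
        (mul_mul (exp_del a) (exp_del b)).trans (exp_dot _ _)
      have h₂ : LDExp (a * c) (dot (del a) (del c)) :=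
        (mul_mul (exp_del a) (exp_del c)).trans (exp_dot _ _)
      exact (mul_mul h₁ h₂).trans (mul_dot (del a) (del b) (del c))
  | refl a => exact ⟨0, LDExp.refl _⟩
  | trans h₁ h₂ ih₁ ih₂ =>
      obtain ⟨n, hn⟩ := ih₁
      obtain ⟨m, hm⟩ := ih₂
      refine ⟨m + n, ?_⟩
      rw [Function.iterate_add_apply]
      exact hm.trans (deln_mono m hn)
  | mul_left c h ih =>
      obtain ⟨n, hn⟩ := ih
      exact ⟨n, (mul_mul (exp_deln n c) hn).trans (deln_mul n _ _)⟩
  | mul_right c h ih =>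
      obtain ⟨n, hn⟩ := ih
      exact ⟨n, (mul_mul hn (exp_deln n c)).trans (deln_mul n _ _)⟩

/-- Confluence of LD-expansion. -/
theorem exp_confluent {t t₁ t₂ : FreeMagma X} (h₁ : LDExp t t₁) (h₂ : LDExp t t₂) :
    ∃ u : FreeMagma X, LDExp t₁ u ∧ LDExp t₂ u := by
  obtain ⟨n, hn⟩ := absorb h₁
  obtain ⟨m, hm⟩ := absorb h₂
  exact ⟨del^[max n m] t,
    hn.trans (deln_le (Nat.le_max_left n m) t),
    hm.trans (deln_le (Nat.le_max_right n m) t)⟩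

end LDAux

/-- confluence property: any two LD-equivalent terms admit a common
LD-expansion. -/
theorem LDEquiv.confluence {X : Type*} (T T' : FreeMagma X) (h : LDEquiv T T') :
    ∃ T'' : FreeMagma X, LDExp T T'' ∧ LDExp T' T'' := by
  induction h with
  | ld a b c => exact ⟨(a * b) * (a * c), LDExp.ld a b c, LDExp.refl _⟩
  | refl a => exact ⟨a, LDExp.refl a, LDExp.refl a⟩
  | symm h ih =>
      obtain ⟨u, h₁, h₂⟩ := ih
      exact ⟨u, h₂, h₁⟩
  | trans h₁ h₂ ih₁ ih₂ =>
      obtain ⟨u, hu₁, hu₂⟩ := ih₁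
      obtain ⟨v, hv₁, hv₂⟩ := ih₂
      obtain ⟨w, hw₁, hw₂⟩ := LDAux.exp_confluent hu₂ hv₁
      exact ⟨w, hu₁.trans hw₁, hv₂.trans hw₂⟩
  | mul_left c h ih =>
      obtain ⟨u, h₁, h₂⟩ := ih
      exact ⟨c * u, LDExp.mul_left c h₁, LDExp.mul_left c h₂⟩
  | mul_right c h ih =>
      obtain ⟨u, h₁, h₂⟩ := ih
      exact ⟨u * c, LDExp.mul_right c h₁, LDExp.mul_right c h₂⟩
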